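/- For every natural number q ≥ 1, every real number x with 0 < x ≤ 1, and every complex number s ≠ 1, the derivatives in s of the Hurwitz zeta function satisfy q^s · ζ'(s, x) + q^s · (log q) · ζ(s, x) = Σ_{r=0}^{q−1} ζ'(s, (r + x)/q). -/

import Mathlib

/-! For `1 < re s`, splitting `∑ₙ (n + x)⁻ˢ` by the residue `r` of `n` modulo `q` and writing
`r + q m + x = q (m + (r + x) / q)` gives the Kubert identity `qˢ ζ(s, x) = ∑ᵣ ζ(s, (r + x) / q)`.
Both sides are holomorphic on `ℂ ∖ {1}`, so the identity persists there, and both are 1-periodic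
in `x`, so it holds for every real `x`. Differentiating it in `s` gives the theorem. -/

open HurwitzZeta Complex Finset

lemma Nat.tsum_eq_sum_range_tsum_add_mul {R : Type*} [AddCommGroup R] [UniformSpace R]
    [IsUniformAddGroup R] [CompleteSpace R] [T0Space R] {f : ℕ → R} (hf : Summable f)
    (q : ℕ) [NeZero q] :
    ∑' n, f n = ∑ r ∈ range q, ∑' m, f (r + q * m) := by
  rw [Nat.sumByResidueClasses hf q]
  obtain ⟨n, rfl⟩ := Nat.exists_eq_succ_of_ne_zero (NeZero.ne q)
  exact Fin.sum_univ_eq_sum_range (fun r ↦ ∑' m, f (r + (n + 1) * m)) (n + 1)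

lemma one_div_ofReal_mul_cpow {a b : ℝ} (ha : 0 ≤ a) (hb : 0 ≤ b) (s : ℂ) :
    1 / ((a * b : ℝ) : ℂ) ^ s = (a : ℂ) ^ (-s) * (1 / (b : ℂ) ^ s) := by
  rw [ofReal_mul, mul_cpow_ofReal_nonneg ha hb, cpow_neg, one_div, one_div, mul_inv]

lemma hurwitzZeta_kubert_of_one_lt_re (q : ℕ) [NeZero q] {x : ℝ} (hx : x ∈ Set.Icc 0 1)
    {s : ℂ} (hs : 1 < s.re) :
    (q : ℂ) ^ s * hurwitzZeta x s =
      ∑ r ∈ range q, hurwitzZeta (((r + x) / q : ℝ) : UnitAddCircle) s := by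
  have hq : (0 : ℝ) < q := Nat.cast_pos.mpr (NeZero.pos q)
  have hq' : (q : ℂ) ≠ 0 := Nat.cast_ne_zero.mpr (NeZero.ne q)
  have hx0 := hx.1
  have hmem (r : ℕ) (hr : r ∈ range q) : ((r + x) / q : ℝ) ∈ Set.Icc 0 1 := by
    have : (r : ℝ) + 1 ≤ q := by exact_mod_cast mem_range.mp hr
    exact ⟨by positivity, (div_le_one hq).mpr (by linarith [hx.2])⟩
  have hterm (r m : ℕ) : 1 / (((r + q * m : ℕ) : ℂ) + x) ^ s =
      (q : ℂ) ^ (-s) * (1 / ((m : ℂ) + ((r + x) / q : ℝ)) ^ s) := by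
    have : ((r + q * m : ℕ) : ℂ) + x = ((q * (m + (r + x) / q) : ℝ) : ℂ) := by
      push_cast; field_simp; ring
    rw [this, one_div_ofReal_mul_cpow hq.le (by positivity)]
    push_cast; rfl
  have hseries := hasSum_hurwitzZeta_of_one_lt_re hx hs
  rw [← hseries.tsum_eq, Nat.tsum_eq_sum_range_tsum_add_mul hseries.summable q, mul_sum]
  refine sum_congr rfl fun r hr ↦ ?_
  simp_rw [hterm, tsum_mul_left, (hasSum_hurwitzZeta_of_one_lt_re (hmem r hr) hs).tsum_eq,
    ← mul_assoc, ← cpow_add _ _ hq', add_neg_cancel, cpow_zero, one_mul]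

lemma eqOn_compl_one_of_forall_one_lt_re {f g : ℂ → ℂ} (hf : DifferentiableOn ℂ f {1}ᶜ)
    (hg : DifferentiableOn ℂ g {1}ᶜ) (h : ∀ s : ℂ, 1 < s.re → f s = g s) :
    Set.EqOn f g {1}ᶜ := by
  have hU : IsOpen ({1}ᶜ : Set ℂ) := isOpen_compl_singleton
  refine (hf.analyticOnNhd hU).eqOn_of_preconnected_of_eventuallyEq (hg.analyticOnNhd hU)
    (isConnected_compl_singleton_of_one_lt_rank (by simp) 1).isPreconnected
    (z₀ := 2) (by norm_num) ?_
  have hre : {z : ℂ | 1 < z.re} ∈ nhds (2 : ℂ) :=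
    (continuous_re.isOpen_preimage _ isOpen_Ioi).mem_nhds (by norm_num)
  filter_upwards [hre] with z hz using h z hz

lemma periodic_sum_range_hurwitzZeta (q : ℕ) [NeZero q] (s : ℂ) :
    Function.Periodic
      (fun x : ℝ ↦ ∑ r ∈ range q, hurwitzZeta (((r + x) / q : ℝ) : UnitAddCircle) s) 1 := by
  intro x
  set g : ℕ → ℂ := fun r ↦ hurwitzZeta (((r + x) / q : ℝ) : UnitAddCircle) s
  have hwrap : g q = g 0 := by
    have : ((q + x) / q : ℝ) = x / q + 1 := by
      field_simp [(Nat.cast_pos.mpr (NeZero.pos q) : (0 : ℝ) < q).ne']; ring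
    simp only [g, this, AddCircle.coe_add_period, Nat.cast_zero, zero_add]
  have hshift : ∑ r ∈ range q, g (r + 1) = ∑ r ∈ range q, g r := by
    have := (sum_range_succ' g q).symm.trans (sum_range_succ g q)
    rwa [hwrap, add_left_inj] at this
  simp only [g, Nat.cast_add, Nat.cast_one] at hshift
  simpa only [add_assoc, add_comm (1 : ℝ)] using hshift

lemma hurwitzZeta_kubert (q : ℕ) [NeZero q] (x : ℝ) {s : ℂ} (hs : s ≠ 1) :
    (q : ℂ) ^ s * hurwitzZeta x s =
      ∑ r ∈ range q, hurwitzZeta (((r + x) / q : ℝ) : UnitAddCircle) s := by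
  have hq : (q : ℂ) ≠ 0 := Nat.cast_ne_zero.mpr (NeZero.ne q)
  have hfract : (q : ℂ) ^ s * hurwitzZeta (Int.fract x : ℝ) s =
      ∑ r ∈ range q, hurwitzZeta (((r + Int.fract x) / q : ℝ) : UnitAddCircle) s := by
    refine eqOn_compl_one_of_forall_one_lt_re (fun z hz ↦ ?_) (fun z hz ↦ ?_)
      (fun z hz ↦ hurwitzZeta_kubert_of_one_lt_re q
        ⟨Int.fract_nonneg x, (Int.fract_lt_one x).le⟩ hz) hs
    · exact ((differentiableAt_id.const_cpow (Or.inl hq)).mul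
        (differentiableAt_hurwitzZeta _ hz)).differentiableWithinAt
    · exact (DifferentiableAt.fun_sum fun r _ ↦
        differentiableAt_hurwitzZeta _ hz).differentiableWithinAt
  have hperiod := (periodic_sum_range_hurwitzZeta q s).sub_int_mul_eq (x := x) ⌊x⌋
  rwa [mul_one, Int.self_sub_floor, ← hfract, AddCircle.coe_fract] at hperiod

theorem hurwitzZeta_deriv_kubert_general (q : ℕ) (hq : 1 ≤ q) (x : ℝ)
    (s : ℂ) (hs : s ≠ 1) :
    (q : ℂ) ^ s * deriv (fun z => hurwitzZeta (x : UnitAddCircle) z) s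
      + (q : ℂ) ^ s * (Real.log q : ℂ) * hurwitzZeta (x : UnitAddCircle) s =
      ∑ r ∈ Finset.range q,
        deriv (fun z => hurwitzZeta ((((r : ℝ) + x) / q : ℝ) : UnitAddCircle) z) s := by
  have : NeZero q := ⟨by omega⟩
  have hq0 : (q : ℂ) ≠ 0 := Nat.cast_ne_zero.mpr (NeZero.ne q)
  have hkubert : (fun z ↦ (q : ℂ) ^ z * hurwitzZeta x z) =ᶠ[nhds s]
      fun z ↦ ∑ r ∈ range q, hurwitzZeta ((((r : ℝ) + x) / q : ℝ) : UnitAddCircle) z := by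
    filter_upwards [isOpen_compl_singleton.mem_nhds hs] with z hz
    exact hurwitzZeta_kubert q x hz
  have hlhs := ((hasDerivAt_id' s).const_cpow (Or.inl hq0)).fun_mul
    (differentiableAt_hurwitzZeta (x : UnitAddCircle) hs).hasDerivAt
  have hrhs := HasDerivAt.fun_sum (u := range q) fun r _ ↦
    (differentiableAt_hurwitzZeta ((((r : ℝ) + x) / q : ℝ) : UnitAddCircle) hs).hasDerivAt
  have hlog : Complex.log q = Real.log q := by
    rw [← ofReal_natCast, ofReal_log (Nat.cast_nonneg q)]
  have hderiv := (hlhs.congr_of_eventuallyEq hkubert.symm).unique hrhs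
  rw [← hlog]
  linear_combination hderiv

theorem hurwitzZeta_deriv_kubert (q : ℕ) (hq : 1 ≤ q) (x : ℝ) (hx0 : 0 < x) (hx1 : x ≤ 1)
    (s : ℂ) (hs : s ≠ 1) :
    (q : ℂ) ^ s * deriv (fun z => hurwitzZeta (x : UnitAddCircle) z) s
      + (q : ℂ) ^ s * (Real.log q : ℂ) * hurwitzZeta (x : UnitAddCircle) s =
      ∑ r ∈ Finset.range q,
        deriv (fun z => hurwitzZeta ((((r : ℝ) + x) / q : ℝ) : UnitAddCircle) z) s :=
  hurwitzZeta_deriv_kubert_general q hq x s hs
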